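/- arXiv:1007.1600 — 2 statements merged into one kernel-verified Lean document; each statement's English description precedes it below -/
import Mathlib

section
/- Suppose a semigroup of positivity-preserving linear operators $P_t$ on bounded measurable functions satisfies the pointwise Harnack bound $p(x,y,s)\le p(x,z,t)(t/s)^{D/2}\exp(\frac{D}{m}\frac{d(y,z)^2}{4(t-s)})$ for the heat kernel $p$ and all $0<s<t$, and $P_t 1\le 1$. Then for every $x$ and $t>0$: $p(x,x,t)\,\mu(B(x,\sqrt{t}))\le 2^{D/2}e^{D/(4m)}$, i.e. the on-diagonal upper bound $p(x,x,t)\le C(D,m)/\mu(B(x,\sqrt{t}))$ holds with $C(D,m)=2^{D/2}e^{D/(4m)}$. -/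
/-!
Harnack's inequality between times `t` and `2 t` bounds `p(x, x, t)` by
`2^(D/2) e^(D/(4m)) p(x, y, 2t)` for every `y` in the ball `B(x, √t)`. Integrating this over the
ball and using `∫ p(x, y, 2t) dμ(y) ≤ 1` gives the bound.
-/

open MeasureTheory

/-- `s` need not be measurable: it is compared with the superlevel set `{a ≤ f}`, of finite measure. -/
theorem mul_measureReal_le_integral_of_le_on {α : Type*} [MeasurableSpace α] {μ : Measure α}
    {f : α → ℝ} (hf : Integrable f μ) (hf_nonneg : 0 ≤ᵐ[μ] f) {a : ℝ} (ha : 0 ≤ a) {s : Set α}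
    (hs : ∀ y ∈ s, a ≤ f y) : a * μ.real s ≤ ∫ y, f y ∂μ := by
  rcases ha.eq_or_lt with rfl | ha
  · simpa using integral_nonneg_of_ae hf_nonneg
  calc a * μ.real s ≤ a * μ.real {y | a ≤ f y} := by
        gcongr
        · exact (hf.measure_ge_lt_top ha).ne
        · exact hs
    _ ≤ ∫ y, f y ∂μ := mul_meas_ge_le_integral_of_nonneg hf_nonneg hf a

theorem harnack_exponent_le_of_dist_sq_le {D m d t : ℝ} (hD : 0 ≤ D) (hm : 0 < m) (ht : 0 < t)
    (hd : d ^ 2 ≤ t) : D / m * d ^ 2 / (4 * (2 * t - t)) ≤ D / (4 * m) := by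
  rw [show 2 * t - t = t by ring, div_le_div_iff₀ (by positivity) (by positivity)]
  calc D / m * d ^ 2 * (4 * m) ≤ D / m * t * (4 * m) := by gcongr
    _ = D * (4 * t) := by field_simp

theorem le_mul_of_mem_ball_of_harnack {M : Type*} [PseudoMetricSpace M] {p : M → M → ℝ → ℝ}
    {D m : ℝ} (hD : 0 < D) (hm : 0 < m)
    (hpos : ∀ x y : M, ∀ t : ℝ, 0 < t → 0 < p x y t)
    (hHarnack : ∀ x y z : M, ∀ s t : ℝ, 0 < s → s < t →
        p x y s ≤ p x z t * (t / s) ^ (D / 2)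
            * Real.exp (D / m * dist y z ^ 2 / (4 * (t - s))))
    {x y : M} {t : ℝ} (ht : 0 < t) (hy : y ∈ Metric.ball x (Real.sqrt t)) :
    p x x t ≤ 2 ^ (D / 2) * Real.exp (D / (4 * m)) * p x y (2 * t) := by
  have hdist : dist x y ^ 2 ≤ t := by
    rw [Metric.mem_ball, dist_comm] at hy
    exact ((Real.lt_sqrt dist_nonneg).mp hy).le
  have hp := (hpos x y (2 * t) (by positivity)).le
  calc p x x t ≤ p x y (2 * t) * (2 * t / t) ^ (D / 2)
        * Real.exp (D / m * dist x y ^ 2 / (4 * (2 * t - t))) :=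
        hHarnack x x y t (2 * t) ht (by linarith)
    _ ≤ p x y (2 * t) * 2 ^ (D / 2) * Real.exp (D / (4 * m)) := by
        rw [mul_div_cancel_right₀ _ ht.ne']
        gcongr _ * _ * Real.exp ?_
        exact harnack_exponent_le_of_dist_sq_le hD.le hm ht hdist
    _ = 2 ^ (D / 2) * Real.exp (D / (4 * m)) * p x y (2 * t) := by ring

theorem on_diagonal_upper_bound_general
    {M : Type*} [PseudoMetricSpace M] [MeasurableSpace M]
    (μ : Measure M) (p : M → M → ℝ → ℝ) (D m : ℝ)
    (hD : 0 < D) (hm : 0 < m)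
    (hpos : ∀ x y : M, ∀ t : ℝ, 0 < t → 0 < p x y t)
    (hInt : ∀ x : M, ∀ t : ℝ, 0 < t → Integrable (fun y => p x y t) μ)
    (hHarnack : ∀ x y z : M, ∀ s t : ℝ, 0 < s → s < t →
        p x y s ≤ p x z t * (t / s) ^ (D / 2)
            * Real.exp (D / m * dist y z ^ 2 / (4 * (t - s))))
    (hMarkov : ∀ x : M, ∀ t : ℝ, 0 < t → (∫ y, p x y t ∂μ) ≤ 1) :
    ∀ x : M, ∀ t : ℝ, 0 < t →
      p x x t * (μ (Metric.ball x (Real.sqrt t))).toReal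
        ≤ 2 ^ (D / 2) * Real.exp (D / (4 * m)) := by
  intro x t ht
  set C := 2 ^ (D / 2) * Real.exp (D / (4 * m))
  have h2t : 0 < 2 * t := by positivity
  calc p x x t * μ.real (Metric.ball x (Real.sqrt t))
      ≤ ∫ y, C * p x y (2 * t) ∂μ :=
        mul_measureReal_le_integral_of_le_on ((hInt x (2 * t) h2t).const_mul C)
          (Filter.Eventually.of_forall fun y => by
            have := (hpos x y (2 * t) h2t).le
            positivity)
          (hpos x x t ht).le
          fun _ hy => le_mul_of_mem_ball_of_harnack hD hm hpos hHarnack ht hy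
    _ = C * ∫ y, p x y (2 * t) ∂μ := integral_const_mul C _
    _ ≤ C := mul_le_of_le_one_right (by positivity) (hMarkov x (2 * t) h2t)

/-- Inequality (2.7): the on-diagonal upper bound for the heat kernel from the
Harnack inequality and sub-Markovianity. -/
theorem on_diagonal_upper_bound
    {M : Type*} [PseudoMetricSpace M] [MeasurableSpace M]
    (μ : Measure M) (p : M → M → ℝ → ℝ) (D m : ℝ)
    (hD : 0 < D) (hm : 0 < m)
    (hpos : ∀ x y : M, ∀ t : ℝ, 0 < t → 0 < p x y t)
    (hsymm : ∀ x y : M, ∀ t : ℝ, 0 < t → p x y t = p y x t)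
    (hInt : ∀ x : M, ∀ t : ℝ, 0 < t → Integrable (fun y => p x y t) μ)
    (hHarnack : ∀ x y z : M, ∀ s t : ℝ, 0 < s → s < t →
        p x y s ≤ p x z t * (t / s) ^ (D / 2)
            * Real.exp (D / m * dist y z ^ 2 / (4 * (t - s))))
    (hMarkov : ∀ x : M, ∀ t : ℝ, 0 < t → (∫ y, p x y t ∂μ) ≤ 1) :
    ∀ x : M, ∀ t : ℝ, 0 < t →
      p x x t * (μ (Metric.ball x (Real.sqrt t))).toReal
        ≤ 2 ^ (D / 2) * Real.exp (D / (4 * m)) :=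
  on_diagonal_upper_bound_general μ p D m hD hm hpos hInt hHarnack hMarkov
end

section
/- Under the hypotheses of the previous statement (Harnack inequality for the heat kernel with constants $D, m$, and $P_t 1 \le 1$), for every $x\in\mathbb{M}$, $R_0>0$ and $R\ge R_0$ one has $\mu(B(x,R)) \le \frac{C(D,m)}{R_0^D\, p(x,x,R_0^2)} R^D$, where $C(D,m)=2^{D/2}e^{D/(4m)}$. -/
/-!
Two consequences of the Harnack inequality drive the bound. With `y = z` it says that
`t ↦ t ^ (D / 2) * p x y t` is nondecreasing, which moves the diagonal value from time `R₀ ²` to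
time `R ²`. With `t = 2 s` and `d(y, z)² ≤ s` it bounds `p x x (R ²)` by a fixed multiple of
`p x y (2 R ²)` on the whole ball `B(x, R)`, and Markov's inequality together with `∫ p ≤ 1` turns
this into `μ(B(x, R)) · p x x (R ²) ≤ 2 ^ (D / 2) e ^ (D / (4 m))`.
-/

open MeasureTheory Metric

theorem measureReal_mul_le_integral_of_le_on {α : Type*} [MeasurableSpace α] {μ : Measure α}
    {f : α → ℝ} (hf_nonneg : ∀ y, 0 ≤ f y) (hf : Integrable f μ) {s : Set α} {c : ℝ}
    (hc : 0 < c) (hs : ∀ y ∈ s, c ≤ f y) :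
    μ.real s * c ≤ ∫ y, f y ∂μ :=
  calc μ.real s * c ≤ c * μ.real {y | c ≤ f y} := by
        rw [mul_comm]
        exact mul_le_mul_of_nonneg_left
          (measureReal_mono hs (hf.measure_ge_lt_top hc).ne) hc.le
    _ ≤ ∫ y, f y ∂μ := mul_meas_ge_le_integral_of_nonneg (ae_of_all μ hf_nonneg) hf c

def HeatKernelHarnack {M : Type*} [PseudoMetricSpace M] (p : M → M → ℝ → ℝ) (D m : ℝ) : Prop :=
  ∀ x y z : M, ∀ s t : ℝ, 0 < s → s < t →
    p x y s ≤ p x z t * (t / s) ^ (D / 2) * Real.exp (D / m * dist y z ^ 2 / (4 * (t - s)))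

namespace HeatKernelHarnack

variable {M : Type*} [PseudoMetricSpace M] {p : M → M → ℝ → ℝ} {D m : ℝ}

theorem rpow_mul_le_rpow_mul (h : HeatKernelHarnack p D m) (x y : M) {s t : ℝ}
    (hs : 0 < s) (hst : s ≤ t) :
    s ^ (D / 2) * p x y s ≤ t ^ (D / 2) * p x y t := by
  rcases hst.eq_or_lt with rfl | hst
  · rfl
  have hxy := h x y y s t hs hst
  rw [dist_self, sq, zero_mul, mul_zero, zero_div, Real.exp_zero, mul_one] at hxy
  calc s ^ (D / 2) * p x y s ≤ s ^ (D / 2) * (p x y t * (t / s) ^ (D / 2)) := by gcongr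
    _ = t ^ (D / 2) * p x y t := by
        rw [Real.div_rpow (by linarith) hs.le]
        field_simp [(Real.rpow_pos_of_pos hs (D / 2)).ne']

theorem le_mul_of_dist_sq_le (h : HeatKernelHarnack p D m) (hDm : 0 ≤ D / m) (x : M)
    {y z : M} {s : ℝ} (hs : 0 < s) (hyz : dist y z ^ 2 ≤ s) (hp : 0 ≤ p x z (2 * s)) :
    p x y s ≤ 2 ^ (D / 2) * Real.exp (D / (4 * m)) * p x z (2 * s) := by
  have hexp : D / m * dist y z ^ 2 / (4 * (2 * s - s)) ≤ D / (4 * m) :=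
    calc D / m * dist y z ^ 2 / (4 * (2 * s - s)) = D / m * (dist y z ^ 2 / s) / 4 := by
          field_simp; ring
      _ ≤ D / m * 1 / 4 := by gcongr; exact div_le_one_of_le₀ hyz hs.le
      _ = D / (4 * m) := by field_simp
  have hxyz := h x y z s (2 * s) hs (by linarith)
  rw [mul_div_cancel_right₀ 2 hs.ne'] at hxyz
  calc p x y s ≤ p x z (2 * s) * 2 ^ (D / 2) * Real.exp (D / (4 * m)) :=
        hxyz.trans (by gcongr)
    _ = 2 ^ (D / 2) * Real.exp (D / (4 * m)) * p x z (2 * s) := by ring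

theorem measureReal_ball_mul_le [MeasurableSpace M] {μ : Measure M}
    (h : HeatKernelHarnack p D m) (hDm : 0 ≤ D / m) (x : M) (hpos : ∀ y : M, ∀ t : ℝ, 0 < t → 0 < p x y t)
    (hInt : ∀ t : ℝ, 0 < t → Integrable (fun y => p x y t) μ)
    (hMarkov : ∀ t : ℝ, 0 < t → (∫ y, p x y t ∂μ) ≤ 1) {R : ℝ} (hR : 0 < R) :
    μ.real (ball x R) * p x x (R ^ 2) ≤ 2 ^ (D / 2) * Real.exp (D / (4 * m)) := by
  set C := 2 ^ (D / 2) * Real.exp (D / (4 * m))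
  have hC : 0 < C := by positivity
  have hR2 : 0 < 2 * R ^ 2 := by positivity
  have hball : ∀ y ∈ ball x R, p x x (R ^ 2) / C ≤ p x y (2 * R ^ 2) := fun y hy ↦ by
    have hxy : dist x y ^ 2 ≤ R ^ 2 := by
      rw [mem_ball'] at hy
      exact pow_le_pow_left₀ dist_nonneg hy.le 2
    rw [div_le_iff₀' hC]
    exact h.le_mul_of_dist_sq_le hDm x (by positivity) hxy (hpos y _ hR2).le
  have hmarkov := measureReal_mul_le_integral_of_le_on (fun y ↦ (hpos y _ hR2).le)
    (hInt _ hR2) (div_pos (hpos x _ (by positivity)) hC) hball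
  rw [mul_div_assoc', div_le_iff₀ hC] at hmarkov
  exact hmarkov.trans (mul_le_of_le_one_left hC.le (hMarkov _ hR2))

end HeatKernelHarnack

theorem volume_growth_general
    {M : Type*} [PseudoMetricSpace M] [MeasurableSpace M]
    (μ : Measure M) (p : M → M → ℝ → ℝ) (D m : ℝ)
    (hD : 0 < D) (hm : 0 < m)
    (hpos : ∀ x y : M, ∀ t : ℝ, 0 < t → 0 < p x y t)
    (hInt : ∀ x : M, ∀ t : ℝ, 0 < t → Integrable (fun y => p x y t) μ)
    (hHarnack : ∀ x y z : M, ∀ s t : ℝ, 0 < s → s < t →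
        p x y s ≤ p x z t * (t / s) ^ (D / 2)
            * Real.exp (D / m * dist y z ^ 2 / (4 * (t - s))))
    (hMarkov : ∀ x : M, ∀ t : ℝ, 0 < t → (∫ y, p x y t ∂μ) ≤ 1) :
    ∀ x : M, ∀ R₀ R : ℝ, 0 < R₀ → R₀ ≤ R →
      (μ (Metric.ball x R)).toReal
        ≤ (2 ^ (D / 2) * Real.exp (D / (4 * m)))
            / (R₀ ^ D * p x x (R₀ ^ 2)) * R ^ D := by
  intro x R₀ R hR₀ hR₀R
  have h : HeatKernelHarnack p D m := hHarnack
  have hDm : 0 ≤ D / m := by positivity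
  have hsq_rpow : ∀ r : ℝ, 0 < r → (r ^ 2) ^ (D / 2) = r ^ D := fun r hr ↦ by
    rw [← Real.rpow_natCast, ← Real.rpow_mul hr.le]
    ring_nf
  have hR : 0 < R := hR₀.trans_le hR₀R
  have hmono := h.rpow_mul_le_rpow_mul x x (pow_pos hR₀ 2) (pow_le_pow_left₀ hR₀.le hR₀R 2)
  rw [hsq_rpow R₀ hR₀, hsq_rpow R hR] at hmono
  have hball := h.measureReal_ball_mul_le hDm x (hpos x) (hInt x) (hMarkov x) hR
  rw [← measureReal_def, div_mul_eq_mul_div,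
    le_div_iff₀ (mul_pos (Real.rpow_pos_of_pos hR₀ D) (hpos x x _ (pow_pos hR₀ 2)))]
  calc μ.real (ball x R) * (R₀ ^ D * p x x (R₀ ^ 2))
      ≤ μ.real (ball x R) * (R ^ D * p x x (R ^ 2)) := by gcongr
    _ = μ.real (ball x R) * p x x (R ^ 2) * R ^ D := by ring
    _ ≤ 2 ^ (D / 2) * Real.exp (D / (4 * m)) * R ^ D := by gcongr

/-- Proposition 2.3: polynomial volume growth of balls. -/
theorem volume_growth
    {M : Type*} [PseudoMetricSpace M] [MeasurableSpace M]
    (μ : Measure M) (p : M → M → ℝ → ℝ) (D m : ℝ)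
    (hD : 0 < D) (hm : 0 < m)
    (hpos : ∀ x y : M, ∀ t : ℝ, 0 < t → 0 < p x y t)
    (hsymm : ∀ x y : M, ∀ t : ℝ, 0 < t → p x y t = p y x t)
    (hInt : ∀ x : M, ∀ t : ℝ, 0 < t → Integrable (fun y => p x y t) μ)
    (hHarnack : ∀ x y z : M, ∀ s t : ℝ, 0 < s → s < t →
        p x y s ≤ p x z t * (t / s) ^ (D / 2)
            * Real.exp (D / m * dist y z ^ 2 / (4 * (t - s))))
    (hMarkov : ∀ x : M, ∀ t : ℝ, 0 < t → (∫ y, p x y t ∂μ) ≤ 1) :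
    ∀ x : M, ∀ R₀ R : ℝ, 0 < R₀ → R₀ ≤ R →
      (μ (Metric.ball x R)).toReal
        ≤ (2 ^ (D / 2) * Real.exp (D / (4 * m)))
            / (R₀ ^ D * p x x (R₀ ^ 2)) * R ^ D :=
  volume_growth_general μ p D m hD hm hpos hInt hHarnack hMarkov
end
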